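/- arXiv:2208.09133 — 4 statements merged into one kernel-verified Lean document; each statement's English description precedes it below -/
import Mathlib

section
/- Let v̂ = v/√(1+|v|²) for v ∈ ℝ³. Then for any k ∈ ℝ³ with k ≠ 0 and any R > 1, the integral ∫_{|u|≤R} 1/((x+c₀)² + (y + k·û)²) du is bounded by C R³/|k| for a constant C independent of x ≥ -c₀ + δ (δ>0), y ∈ ℝ, k and R. -/
open MeasureTheory Real
open scoped RealInnerProductSpace
open Set
open scoped ENNReal

set_option maxHeartbeats 1000000

noncomputable section

theorem my_lintegral_cov {s : Set ℝ} {f f' : ℝ → ℝ}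
    (hs : MeasurableSet s) (hf' : ∀ x ∈ s, HasDerivWithinAt f (f' x) s x) (hf : Set.InjOn f s)
    (g : ℝ → ℝ≥0∞) :
    ∫⁻ x in f '' s, g x = ∫⁻ x in s, ENNReal.ofReal |f' x| * g (f x) := by
  simpa only [ContinuousLinearMap.det_toSpanSingleton] using
    MeasureTheory.lintegral_image_eq_lintegral_abs_det_fderiv_mul volume hs
      (fun x hx => (hf' x hx).hasFDerivWithinAt) hf g

theorem my_integral_cauchy0 (a : ℝ) (ha : 0 < a) : ∫ z : ℝ, (a ^ 2 + z ^ 2)⁻¹ = π / a := by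
  have h : ∀ z : ℝ, (a ^ 2 + z ^ 2)⁻¹ = a⁻¹ * a⁻¹ * ((fun w : ℝ => (1 + w ^ 2)⁻¹) (a⁻¹ * z)) := by
    intro z
    have h2 : a ^ 2 + z ^ 2 ≠ 0 := by positivity
    have h3 : (1 : ℝ) + (a⁻¹ * z) ^ 2 ≠ 0 := by positivity
    field_simp
  simp_rw [h]
  rw [MeasureTheory.integral_const_mul,
    MeasureTheory.Measure.integral_comp_mul_left (fun w : ℝ => (1 + w ^ 2)⁻¹) a⁻¹,
    integral_univ_inv_one_add_sq, inv_inv, smul_eq_mul, abs_of_pos ha]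
  field_simp

theorem my_integral_cauchy (a b y : ℝ) (ha : 0 < a) (hb : 0 < b) :
    ∫ t : ℝ, (a ^ 2 + (y + b * t) ^ 2)⁻¹ = π / (a * b) := by
  have h1 : (∫ t : ℝ, (a ^ 2 + (y + b * t) ^ 2)⁻¹)
      = ∫ t : ℝ, (fun z : ℝ => (a ^ 2 + (y + z) ^ 2)⁻¹) (b * t) := rfl
  rw [h1, MeasureTheory.Measure.integral_comp_mul_left (fun z : ℝ => (a ^ 2 + (y + z) ^ 2)⁻¹) b]
  have h2 : (∫ z : ℝ, (a ^ 2 + (y + z) ^ 2)⁻¹)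
      = ∫ z : ℝ, (fun w : ℝ => (a ^ 2 + w ^ 2)⁻¹) (y + z) := rfl
  rw [h2, MeasureTheory.integral_add_left_eq_self (fun w : ℝ => (a ^ 2 + w ^ 2)⁻¹) y,
    my_integral_cauchy0 a ha, smul_eq_mul, abs_of_pos (inv_pos.2 hb)]
  rw [div_mul_eq_div_div]
  rw [div_eq_mul_inv (π / a), mul_comm]

theorem my_integrable_cauchy (a b y : ℝ) (ha : 0 < a) (hb : 0 < b) :
    Integrable fun t : ℝ => (a ^ 2 + (y + b * t) ^ 2)⁻¹ := by
  have h0 : Integrable fun z : ℝ => (a ^ 2 + z ^ 2)⁻¹ := by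
    have h : ∀ z : ℝ, (a ^ 2 + z ^ 2)⁻¹ = a⁻¹ * a⁻¹ * ((fun w : ℝ => (1 + w ^ 2)⁻¹) (a⁻¹ * z)) := by
      intro z
      have h2 : a ^ 2 + z ^ 2 ≠ 0 := by positivity
      have h3 : (1 : ℝ) + (a⁻¹ * z) ^ 2 ≠ 0 := by positivity
      field_simp
    simp_rw [h]
    exact (integrable_inv_one_add_sq.comp_mul_left' (inv_ne_zero ha.ne')).const_mul _
  have h1 : Integrable fun z : ℝ => (a ^ 2 + (y + z) ^ 2)⁻¹ := by
    have he : (fun z : ℝ => (a ^ 2 + (y + z) ^ 2)⁻¹)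
        = (fun w : ℝ => (a ^ 2 + w ^ 2)⁻¹) ∘ (fun z : ℝ => y + z) := rfl
    rw [he]
    exact ((measurePreserving_add_left volume y).integrable_comp_emb
      (MeasurableEquiv.addLeft y).measurableEmbedding).2 h0
  exact h1.comp_mul_left' hb.ne'

theorem my_lintegral_cauchy (a b y : ℝ) (ha : 0 < a) (hb : 0 < b) :
    ∫⁻ t : ℝ, ENNReal.ofReal (1 / (a ^ 2 + (y + b * t) ^ 2)) = ENNReal.ofReal (π / (a * b)) := by
  simp_rw [one_div]
  rw [← MeasureTheory.ofReal_integral_eq_lintegral_ofReal (my_integrable_cauchy a b y ha hb)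
    (Filter.Eventually.of_forall fun t => by positivity), my_integral_cauchy a b y ha hb]

theorem my_key1d (a b y R q : ℝ) (hq : 0 ≤ q) :
    (∫⁻ t : ℝ, (if t ^ 2 + q ≤ R ^ 2 then
        ENNReal.ofReal (1 / (a ^ 2 + (y + b * (t / Real.sqrt (1 + (t ^ 2 + q)))) ^ 2)) else 0))
    = ∫⁻ φ in Ioo (-1 : ℝ) 1,
        ENNReal.ofReal (Real.sqrt (1 + q) * ((1 - φ ^ 2) * Real.sqrt (1 - φ ^ 2))⁻¹) *
        (if φ ^ 2 * (1 + R ^ 2) ≤ R ^ 2 - q then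
          ENNReal.ofReal (1 / (a ^ 2 + (y + b * φ) ^ 2)) else 0) := by
  have hA0 : 0 < 1 + q := by linarith
  have hsA : 0 < Real.sqrt (1 + q) := Real.sqrt_pos.2 hA0
  set f : ℝ → ℝ := fun φ => Real.sqrt (1 + q) * φ / Real.sqrt (1 - φ ^ 2) with hfdef
  set f' : ℝ → ℝ := fun φ =>
    Real.sqrt (1 + q) * ((1 - φ ^ 2) * Real.sqrt (1 - φ ^ 2))⁻¹ with hf'def
  have hder : ∀ φ ∈ Ioo (-1 : ℝ) 1, HasDerivAt f (f' φ) φ := by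
    intro φ hφ
    have hu : 0 < 1 - φ ^ 2 := by nlinarith [hφ.1, hφ.2]
    have hsu : 0 < Real.sqrt (1 - φ ^ 2) := Real.sqrt_pos.2 hu
    have h1 : HasDerivAt (fun φ : ℝ => 1 - φ ^ 2) (-(2 * φ)) φ := by
      simpa using ((hasDerivAt_pow 2 φ).const_sub 1)
    have h2 : HasDerivAt (fun φ : ℝ => Real.sqrt (1 - φ ^ 2))
        (-(2 * φ) / (2 * Real.sqrt (1 - φ ^ 2))) φ := by
      simpa using h1.sqrt hu.ne'
    have h3 : HasDerivAt (fun φ : ℝ => Real.sqrt (1 + q) * φ) (Real.sqrt (1 + q)) φ := by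
      simpa using (hasDerivAt_id φ).const_mul (Real.sqrt (1 + q))
    have h4 := h3.div h2 hsu.ne'
    refine h4.congr_deriv ?_
    symm
    have hsq : Real.sqrt (1 - φ ^ 2) ^ 2 = 1 - φ ^ 2 := Real.sq_sqrt hu.le
    rw [hf'def]
    field_simp
    linear_combination (φ ^ 2) * hsq
  have hmono : StrictMonoOn f (Ioo (-1 : ℝ) 1) := by
    apply strictMonoOn_of_deriv_pos (convex_Ioo _ _)
    · exact fun φ hφ => ((hder φ hφ).continuousAt.continuousWithinAt)
    · intro φ hφ
      rw [interior_Ioo] at hφ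
      rw [(hder φ hφ).deriv]
      have hu : 0 < 1 - φ ^ 2 := by nlinarith [hφ.1, hφ.2]
      have hsu : 0 < Real.sqrt (1 - φ ^ 2) := Real.sqrt_pos.2 hu
      rw [hf'def]
      positivity
  have himg : f '' (Ioo (-1 : ℝ) 1) = univ := by
    apply Set.eq_univ_of_forall
    intro t
    have hs2 : 0 < 1 + q + t ^ 2 := by positivity
    have hs0 : 0 < Real.sqrt (1 + q + t ^ 2) := Real.sqrt_pos.2 hs2
    have hss : Real.sqrt (1 + q + t ^ 2) ^ 2 = 1 + q + t ^ 2 := Real.sq_sqrt hs2.le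
    have habs : |t| < Real.sqrt (1 + q + t ^ 2) := by
      rw [← Real.sqrt_sq_eq_abs]
      exact Real.sqrt_lt_sqrt (sq_nonneg t) (by linarith)
    have h1 : -1 < t / Real.sqrt (1 + q + t ^ 2) := by
      rw [lt_div_iff₀ hs0]
      nlinarith [abs_lt.1 habs]
    have h2 : t / Real.sqrt (1 + q + t ^ 2) < 1 := by
      rw [div_lt_one hs0]
      nlinarith [abs_lt.1 habs]
    refine ⟨t / Real.sqrt (1 + q + t ^ 2), ⟨h1, h2⟩, ?_⟩
    have hu : 1 - (t / Real.sqrt (1 + q + t ^ 2)) ^ 2 = (1 + q) / (1 + q + t ^ 2) := by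
      rw [div_pow, hss]
      field_simp
      ring
    rw [hfdef]
    simp only
    rw [hu, Real.sqrt_div hA0.le]
    field_simp
  have hinj := hmono.injOn
  have hcov := my_lintegral_cov (measurableSet_Ioo)
      (fun φ hφ => (hder φ hφ).hasDerivWithinAt) hinj
      (fun t => if t ^ 2 + q ≤ R ^ 2 then
        ENNReal.ofReal (1 / (a ^ 2 + (y + b * (t / Real.sqrt (1 + (t ^ 2 + q)))) ^ 2)) else 0)
  rw [himg, Measure.restrict_univ] at hcov
  rw [hcov]
  apply MeasureTheory.setLIntegral_congr_fun measurableSet_Ioo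
  intro φ hφ
  have hu : 0 < 1 - φ ^ 2 := by nlinarith [hφ.1, hφ.2]
  have hsu : 0 < Real.sqrt (1 - φ ^ 2) := Real.sqrt_pos.2 hu
  have hsq : Real.sqrt (1 - φ ^ 2) ^ 2 = 1 - φ ^ 2 := Real.sq_sqrt hu.le
  have hf'pos : 0 < f' φ := by rw [hf'def]; positivity
  have hfsq : f φ ^ 2 = (1 + q) * φ ^ 2 / (1 - φ ^ 2) := by
    rw [hfdef]
    simp only
    rw [div_pow, mul_pow, Real.sq_sqrt hA0.le, hsq]
  have hiff : (f φ ^ 2 + q ≤ R ^ 2) ↔ (φ ^ 2 * (1 + R ^ 2) ≤ R ^ 2 - q) := by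
    rw [hfsq]
    constructor
    · intro h
      have h' : (1 + q) * φ ^ 2 / (1 - φ ^ 2) ≤ R ^ 2 - q := by linarith
      have := (div_le_iff₀ hu).1 h'
      nlinarith
    · intro h
      have : (1 + q) * φ ^ 2 / (1 - φ ^ 2) ≤ R ^ 2 - q := (div_le_iff₀ hu).2 (by nlinarith)
      linarith
  have hval : f φ / Real.sqrt (1 + (f φ ^ 2 + q)) = φ := by
    have harg : 1 + (f φ ^ 2 + q) = (1 + q) / (1 - φ ^ 2) := by
      rw [hfsq]
      field_simp
      ring
    rw [harg, Real.sqrt_div hA0.le, hfdef]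
    simp only
    field_simp
  beta_reduce
  rw [abs_of_pos hf'pos, hval, if_congr hiff rfl rfl]

theorem my_planar (B : ℝ) :
    (∫⁻ w : Fin 2 → ℝ, (if (∑ j, w j ^ 2) ≤ B then
        ENNReal.ofReal (Real.sqrt (1 + ∑ j, w j ^ 2)) else 0))
      ≤ ENNReal.ofReal ((1 + B) * Real.sqrt (1 + B) * 4) := by
  by_cases hB : 0 ≤ B
  · have hbound : ∀ w : Fin 2 → ℝ, (if (∑ j, w j ^ 2) ≤ B then
        ENNReal.ofReal (Real.sqrt (1 + ∑ j, w j ^ 2)) else 0)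
        ≤ (Set.univ.pi fun _ : Fin 2 => Icc (-Real.sqrt B) (Real.sqrt B)).indicator
            (fun _ => ENNReal.ofReal (Real.sqrt (1 + B))) w := by
      intro w
      by_cases h : (∑ j, w j ^ 2) ≤ B
      · rw [if_pos h]
        have hmem : w ∈ Set.univ.pi fun _ : Fin 2 => Icc (-Real.sqrt B) (Real.sqrt B) := by
          intro j _
          have h1 : w j ^ 2 ≤ B :=
            le_trans (Finset.single_le_sum (fun i _ => sq_nonneg (w i)) (Finset.mem_univ j)) h
          have h2 : |w j| ≤ Real.sqrt B := by
            rw [← Real.sqrt_sq_eq_abs]; exact Real.sqrt_le_sqrt h1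
          exact ⟨(abs_le.1 h2).1, (abs_le.1 h2).2⟩
        rw [Set.indicator_of_mem hmem]
        exact ENNReal.ofReal_le_ofReal (Real.sqrt_le_sqrt (by linarith))
      · rw [if_neg h]; exact zero_le
    have hms : MeasurableSet (Set.univ.pi fun _ : Fin 2 => Icc (-Real.sqrt B) (Real.sqrt B)) :=
      MeasurableSet.univ_pi fun _ => measurableSet_Icc
    calc (∫⁻ w : Fin 2 → ℝ, (if (∑ j, w j ^ 2) ≤ B then
            ENNReal.ofReal (Real.sqrt (1 + ∑ j, w j ^ 2)) else 0))
        ≤ ∫⁻ w, (Set.univ.pi fun _ : Fin 2 => Icc (-Real.sqrt B) (Real.sqrt B)).indicator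
            (fun _ => ENNReal.ofReal (Real.sqrt (1 + B))) w := lintegral_mono hbound
      _ = ENNReal.ofReal (Real.sqrt (1 + B)) *
            volume (Set.univ.pi fun _ : Fin 2 => Icc (-Real.sqrt B) (Real.sqrt B)) := by
          rw [lintegral_indicator hms, MeasureTheory.setLIntegral_const]
      _ ≤ ENNReal.ofReal ((1 + B) * Real.sqrt (1 + B) * 4) := by
          rw [volume_pi_pi, Real.volume_Icc]
          have : Real.sqrt B - -Real.sqrt B = 2 * Real.sqrt B := by ring
          rw [this, Finset.prod_const]
          have hcard : (Finset.univ : Finset (Fin 2)).card = 2 := by simp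
          rw [hcard, ← ENNReal.ofReal_pow (by positivity), ← ENNReal.ofReal_mul (by positivity)]
          apply ENNReal.ofReal_le_ofReal
          have hBB : Real.sqrt B ^ 2 = B := Real.sq_sqrt hB
          have h1 : Real.sqrt (1 + B) * (2 * Real.sqrt B) ^ 2 = Real.sqrt (1 + B) * (4 * B) := by
            rw [mul_pow]; rw [hBB]; ring
          rw [h1]
          nlinarith [Real.sqrt_nonneg (1 + B), Real.sqrt_nonneg B]
  · have h0 : ∀ w : Fin 2 → ℝ, (if (∑ j, w j ^ 2) ≤ B then
        ENNReal.ofReal (Real.sqrt (1 + ∑ j, w j ^ 2)) else 0) = 0 := by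
      intro w
      rw [if_neg]
      intro h
      exact hB (le_trans (Finset.sum_nonneg fun i _ => sq_nonneg (w i)) h)
    simp only [h0, lintegral_zero]
    exact zero_le

theorem my_prod (a b y R : ℝ) (ha : 0 < a) (hb : 0 < b) :
    (∫⁻ p : ℝ × (Fin 2 → ℝ),
        (if p.1 ^ 2 + (∑ j, p.2 j ^ 2) ≤ R ^ 2 then
          ENNReal.ofReal (1 / (a ^ 2 +
            (y + b * (p.1 / Real.sqrt (1 + (p.1 ^ 2 + ∑ j, p.2 j ^ 2)))) ^ 2)) else 0))
      ≤ ENNReal.ofReal (4 * ((1 + R ^ 2) * Real.sqrt (1 + R ^ 2)) * (π / (a * b))) := by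
  have hq : Measurable fun w : Fin 2 → ℝ => ∑ j, w j ^ 2 :=
    Finset.measurable_sum _ fun j _ => ((measurable_pi_apply j).pow_const 2)
  set F : ℝ × (Fin 2 → ℝ) → ℝ≥0∞ := fun p =>
    if p.1 ^ 2 + (∑ j, p.2 j ^ 2) ≤ R ^ 2 then
      ENNReal.ofReal (1 / (a ^ 2 +
        (y + b * (p.1 / Real.sqrt (1 + (p.1 ^ 2 + ∑ j, p.2 j ^ 2)))) ^ 2)) else 0 with hFdef
  have hsm : Measurable fun p : ℝ × (Fin 2 → ℝ) => p.1 ^ 2 + ∑ j, p.2 j ^ 2 :=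
    (measurable_fst.pow_const 2).add (hq.comp measurable_snd)
  have hFm : Measurable F := by
    apply Measurable.ite (measurableSet_le hsm measurable_const) _ measurable_const
    apply ENNReal.measurable_ofReal.comp
    apply Measurable.const_div
    apply Measurable.add measurable_const
    apply Measurable.pow_const
    apply Measurable.const_add
    apply Measurable.const_mul
    exact measurable_fst.div (Real.continuous_sqrt.measurable.comp (measurable_const.add hsm))
  set G : (Fin 2 → ℝ) → ℝ → ℝ≥0∞ := fun w φ =>
    ENNReal.ofReal (Real.sqrt (1 + ∑ j, w j ^ 2) * ((1 - φ ^ 2) * Real.sqrt (1 - φ ^ 2))⁻¹) *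
      (if φ ^ 2 * (1 + R ^ 2) ≤ R ^ 2 - ∑ j, w j ^ 2 then
        ENNReal.ofReal (1 / (a ^ 2 + (y + b * φ) ^ 2)) else 0) with hGdef
  have hHm : Measurable fun φ : ℝ => ENNReal.ofReal (1 / (a ^ 2 + (y + b * φ) ^ 2)) := by
    apply ENNReal.measurable_ofReal.comp
    apply Measurable.const_div
    exact measurable_const.add (((measurable_id.const_mul b).const_add y).pow_const 2)
  have hGm : Measurable (Function.uncurry fun w φ => (Ioo (-1 : ℝ) 1).indicator (G w) φ) := by
    have heq : (Function.uncurry fun w φ => (Ioo (-1 : ℝ) 1).indicator (G w) φ)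
        = fun p : (Fin 2 → ℝ) × ℝ => if p.2 ∈ Ioo (-1 : ℝ) 1 then G p.1 p.2 else 0 := by
      ext p
      simp [Function.uncurry, Set.indicator_apply]
    rw [heq]
    apply Measurable.ite (measurable_snd measurableSet_Ioo) _ measurable_const
    apply Measurable.mul
    · apply ENNReal.measurable_ofReal.comp
      apply Measurable.mul
      · exact Real.continuous_sqrt.measurable.comp
          (measurable_const.add (hq.comp measurable_fst))
      · apply Measurable.inv
        have h2 : Measurable fun p : (Fin 2 → ℝ) × ℝ => 1 - p.2 ^ 2 :=
          (measurable_snd.pow_const 2).const_sub 1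
        exact h2.mul (Real.continuous_sqrt.measurable.comp h2)
    · apply Measurable.ite _ (hHm.comp measurable_snd) measurable_const
      exact measurableSet_le ((measurable_snd.pow_const 2).mul_const _)
        (measurable_const.sub (hq.comp measurable_fst))
  set D : ℝ≥0∞ := ENNReal.ofReal (4 * ((1 + R ^ 2) * Real.sqrt (1 + R ^ 2))) with hDdef
  have hφbound : ∀ φ : ℝ, (∫⁻ w : Fin 2 → ℝ, (Ioo (-1 : ℝ) 1).indicator (G w) φ)
      ≤ D * ENNReal.ofReal (1 / (a ^ 2 + (y + b * φ) ^ 2)) := by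
    intro φ
    by_cases hφ : φ ∈ Ioo (-1 : ℝ) 1
    · simp only [Set.indicator_of_mem hφ]
      have hu : 0 < 1 - φ ^ 2 := by
        rcases hφ with ⟨h1, h2⟩; nlinarith
      have hsu : 0 < Real.sqrt (1 - φ ^ 2) := Real.sqrt_pos.2 hu
      set B := R ^ 2 - φ ^ 2 * (1 + R ^ 2) with hBdef
      have hrw : ∀ w : Fin 2 → ℝ, G w φ
          = (if (∑ j, w j ^ 2) ≤ B then
              ENNReal.ofReal (Real.sqrt (1 + ∑ j, w j ^ 2)) else 0) *
            (ENNReal.ofReal (((1 - φ ^ 2) * Real.sqrt (1 - φ ^ 2))⁻¹) *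
              ENNReal.ofReal (1 / (a ^ 2 + (y + b * φ) ^ 2))) := by
        intro w
        have hc : (φ ^ 2 * (1 + R ^ 2) ≤ R ^ 2 - ∑ j, w j ^ 2) ↔ ((∑ j, w j ^ 2) ≤ B) := by
          rw [hBdef]; constructor <;> intro h <;> linarith
        rw [hGdef]
        simp only
        by_cases h : (∑ j, w j ^ 2) ≤ B
        · rw [if_pos (hc.2 h), if_pos h,
            ENNReal.ofReal_mul (Real.sqrt_nonneg _), mul_assoc]
        · rw [if_neg (fun hh => h (hc.1 hh)), if_neg h, mul_zero, zero_mul]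
      rw [lintegral_congr hrw]
      have hwm : Measurable fun w : Fin 2 → ℝ =>
          (if (∑ j, w j ^ 2) ≤ B then ENNReal.ofReal (Real.sqrt (1 + ∑ j, w j ^ 2)) else 0) := by
        apply Measurable.ite (measurableSet_le hq measurable_const) _ measurable_const
        exact ENNReal.measurable_ofReal.comp
          (Real.continuous_sqrt.measurable.comp (measurable_const.add hq))
      rw [lintegral_mul_const _ hwm]
      have hstep := mul_le_mul_left (my_planar B)
        (ENNReal.ofReal (((1 - φ ^ 2) * Real.sqrt (1 - φ ^ 2))⁻¹) *
          ENNReal.ofReal (1 / (a ^ 2 + (y + b * φ) ^ 2)))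
      refine le_trans hstep ?_
      have h1B : 1 + B = (1 + R ^ 2) * (1 - φ ^ 2) := by rw [hBdef]; ring
      have hBpos : 0 ≤ 1 + B := by rw [h1B]; positivity
      rw [← mul_assoc, ← ENNReal.ofReal_mul
        (mul_nonneg (mul_nonneg hBpos (Real.sqrt_nonneg _)) (by norm_num))]
      apply mul_le_mul_left
      apply ENNReal.ofReal_le_ofReal
      rw [h1B, Real.sqrt_mul (by positivity)]
      have heq : (1 + R ^ 2) * (1 - φ ^ 2) * (Real.sqrt (1 + R ^ 2) * Real.sqrt (1 - φ ^ 2)) * 4 *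
          ((1 - φ ^ 2) * Real.sqrt (1 - φ ^ 2))⁻¹ = 4 * ((1 + R ^ 2) * Real.sqrt (1 + R ^ 2)) := by
        field_simp
      rw [heq]
    · simp only [Set.indicator_of_notMem hφ, lintegral_zero]
      exact zero_le
  have h1 : (∫⁻ p : ℝ × (Fin 2 → ℝ), F p) = ∫⁻ w : Fin 2 → ℝ, ∫⁻ t : ℝ, F (t, w) := by
    rw [MeasureTheory.Measure.volume_eq_prod]
    exact MeasureTheory.lintegral_prod_symm F hFm.aemeasurable
  have h2 : ∀ w : Fin 2 → ℝ, (∫⁻ t : ℝ, F (t, w)) = ∫⁻ φ in Ioo (-1 : ℝ) 1, G w φ :=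
    fun w => my_key1d a b y R _ (Finset.sum_nonneg fun i _ => sq_nonneg (w i))
  have h3 : ∀ w : Fin 2 → ℝ, (∫⁻ φ in Ioo (-1 : ℝ) 1, G w φ)
      = ∫⁻ φ : ℝ, (Ioo (-1 : ℝ) 1).indicator (G w) φ :=
    fun w => (lintegral_indicator measurableSet_Ioo _).symm
  rw [h1, lintegral_congr h2, lintegral_congr h3, lintegral_lintegral_swap hGm.aemeasurable]
  calc (∫⁻ φ : ℝ, ∫⁻ w : Fin 2 → ℝ, (Ioo (-1 : ℝ) 1).indicator (G w) φ)
      ≤ ∫⁻ φ : ℝ, D * ENNReal.ofReal (1 / (a ^ 2 + (y + b * φ) ^ 2)) :=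
        lintegral_mono hφbound
    _ = D * ∫⁻ φ : ℝ, ENNReal.ofReal (1 / (a ^ 2 + (y + b * φ) ^ 2)) :=
        lintegral_const_mul D hHm
    _ = D * ENNReal.ofReal (π / (a * b)) := by rw [my_lintegral_cauchy a b y ha hb]
    _ = ENNReal.ofReal (4 * ((1 + R ^ 2) * Real.sqrt (1 + R ^ 2)) * (π / (a * b))) := by
        rw [hDdef, ← ENNReal.ofReal_mul (by positivity)]

/-- The relativistic velocity `v̂ = v / √(1+|v|²)`. -/
def vhat (u : EuclideanSpace ℝ (Fin 3)) : EuclideanSpace ℝ (Fin 3) :=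
  (Real.sqrt (1 + ‖u‖ ^ 2))⁻¹ • u

/-- for any `k ≠ 0` and `R > 1`, the integral
`∫_{|u|≤R} 1/((x+c₀)² + (y + k·û)²) du` is bounded by `C R³/|k|`, uniformly in
`x ≥ -c₀ + δ` and `y ∈ ℝ`. -/
theorem cauchy_kernel_integral_bound (c₀ δ : ℝ) (hc₀ : 0 < c₀) (hδ : 0 < δ) :
    ∃ C > 0, ∀ (x y : ℝ) (k : EuclideanSpace ℝ (Fin 3)) (R : ℝ),
      -c₀ + δ ≤ x → k ≠ 0 → 1 < R →
      (∫ u in {u : EuclideanSpace ℝ (Fin 3) | ‖u‖ ≤ R},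
          1 / ((x + c₀) ^ 2 + (y + (inner ℝ k (vhat u) : ℝ)) ^ 2)) ≤ C * R ^ 3 / ‖k‖ := by
  refine ⟨12 * π / δ, by positivity, ?_⟩
  intro x y k R hx hk hR
  have hb : 0 < ‖k‖ := norm_pos_iff.2 hk
  have ha : 0 < x + c₀ := by linarith
  have haδ : δ ≤ x + c₀ := by linarith
  set a := x + c₀ with hadef
  set b := ‖k‖ with hbdef
  -- rotation sending `b • e₀` to `k`
  set e : EuclideanSpace ℝ (Fin 3) := EuclideanSpace.single (0 : Fin 3) (1 : ℝ) with hedef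
  have he1 : ‖e‖ = 1 := by rw [hedef]; simp
  have hkn : ‖e‖ = ‖b⁻¹ • k‖ := by
    rw [he1, norm_smul, norm_inv, Real.norm_eq_abs, abs_of_pos hb, ← hbdef]
    field_simp
  set Q := Submodule.reflection (Submodule.span ℝ {e - b⁻¹ • k})ᗮ with hQdef
  have hQe : Q e = b⁻¹ • k := Submodule.reflection_sub hkn
  have hQbe : Q (b • e) = k := by
    rw [LinearIsometryEquiv.map_smul, hQe, smul_inv_smul₀ hb.ne']
  have hSQ : (⇑Q) ⁻¹' {u : EuclideanSpace ℝ (Fin 3) | ‖u‖ ≤ R}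
      = {u : EuclideanSpace ℝ (Fin 3) | ‖u‖ ≤ R} := by
    ext u
    simp [Set.mem_setOf_eq, Q.norm_map]
  have hvQ : ∀ u, vhat (Q u) = Q (vhat u) := by
    intro u
    rw [vhat, vhat, Q.norm_map, LinearIsometryEquiv.map_smul]
  have hinner : ∀ u, (inner ℝ k (vhat (Q u)) : ℝ)
      = b * ((Real.sqrt (1 + ‖u‖ ^ 2))⁻¹ * u 0) := by
    intro u
    rw [hvQ u, ← hQbe, LinearIsometryEquiv.inner_map_map, real_inner_smul_left]
    congr 1
    rw [hedef, EuclideanSpace.inner_single_left]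
    simp [vhat, PiLp.smul_apply, smul_eq_mul]
  have h0 := (LinearIsometryEquiv.measurePreserving Q).setIntegral_preimage_emb
      (Q.toHomeomorph.measurableEmbedding)
      (fun u => 1 / (a ^ 2 + (y + (inner ℝ k (vhat u) : ℝ)) ^ 2))
      {u : EuclideanSpace ℝ (Fin 3) | ‖u‖ ≤ R}
  rw [hSQ] at h0
  rw [← h0]
  simp only [hinner]
  -- Now pass to the lintegral
  set G₀ : EuclideanSpace ℝ (Fin 3) → ℝ := fun u =>
    1 / (a ^ 2 + (y + b * ((Real.sqrt (1 + ‖u‖ ^ 2))⁻¹ * u 0)) ^ 2) with hG₀def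
  have hc0 : Continuous fun u : EuclideanSpace ℝ (Fin 3) => (u 0 : ℝ) := by fun_prop
  have hcs : Continuous fun u : EuclideanSpace ℝ (Fin 3) => Real.sqrt (1 + ‖u‖ ^ 2) :=
    Real.continuous_sqrt.comp (continuous_const.add ((continuous_norm).pow 2))
  have hG₀c : Continuous G₀ := by
    rw [hG₀def]
    apply Continuous.div continuous_const
    · apply Continuous.add continuous_const
      apply Continuous.pow
      apply Continuous.add continuous_const
      apply Continuous.mul continuous_const
      exact (hcs.inv₀ (fun u => by positivity)).mul hc0
    · intro u
      positivity
  have hnn : 0 ≤ᵐ[volume.restrict {u : EuclideanSpace ℝ (Fin 3) | ‖u‖ ≤ R}] G₀ :=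
    Filter.Eventually.of_forall fun u => by rw [hG₀def]; positivity
  rw [MeasureTheory.integral_eq_lintegral_of_nonneg_ae hnn hG₀c.aestronglyMeasurable]
  apply ENNReal.toReal_le_of_le_ofReal (by positivity)
  -- transfer to the product space
  set θ : EuclideanSpace ℝ (Fin 3) ≃ᵐ ℝ × (Fin 2 → ℝ) :=
    (MeasurableEquiv.toLp 2 (Fin 3 → ℝ)).symm.trans
      (MeasurableEquiv.piFinSuccAbove (fun _ : Fin 3 => ℝ) 0) with hθdef
  have hθmp : MeasurePreserving (⇑θ) volume volume := by
    have h := (volume_preserving_piFinSuccAbove (fun _ : Fin 3 => ℝ) 0).comp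
      (EuclideanSpace.volume_preserving_symm_measurableEquiv_toLp (Fin 3))
    simpa [hθdef, MeasurableEquiv.coe_trans] using h
  set F : ℝ × (Fin 2 → ℝ) → ℝ≥0∞ := fun p =>
    if p.1 ^ 2 + (∑ j, p.2 j ^ 2) ≤ R ^ 2 then
      ENNReal.ofReal (1 / (a ^ 2 +
        (y + b * (p.1 / Real.sqrt (1 + (p.1 ^ 2 + ∑ j, p.2 j ^ 2)))) ^ 2)) else 0 with hFdef
  have hSmeas : MeasurableSet {u : EuclideanSpace ℝ (Fin 3) | ‖u‖ ≤ R} :=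
    measurableSet_le measurable_norm measurable_const
  have hsum : ∀ u : EuclideanSpace ℝ (Fin 3),
      (u 0) ^ 2 + (∑ j : Fin 2, (u ((0 : Fin 3).succAbove j)) ^ 2) = ‖u‖ ^ 2 := by
    intro u
    rw [EuclideanSpace.norm_eq, Real.sq_sqrt (by positivity)]
    simp only [Real.norm_eq_abs, sq_abs, Fin.succAbove_zero]
    rw [Fin.sum_univ_three, Fin.sum_univ_two]
    simp only [Fin.succ_zero_eq_one, Fin.succ_one_eq_two]
    ring
  have hFθ : ∀ u : EuclideanSpace ℝ (Fin 3),
      ({u : EuclideanSpace ℝ (Fin 3) | ‖u‖ ≤ R}.indicator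
        (fun u => ENNReal.ofReal (G₀ u)) u) = F (θ u) := by
    intro u
    have hθu : θ u = (u 0, fun j => u ((0 : Fin 3).succAbove j)) := rfl
    have hmem : (u ∈ {u : EuclideanSpace ℝ (Fin 3) | ‖u‖ ≤ R})
        ↔ ((θ u).1 ^ 2 + (∑ j, (θ u).2 j ^ 2) ≤ R ^ 2) := by
      rw [hθu]
      simp only [Set.mem_setOf_eq]
      rw [hsum u]
      constructor
      · intro h
        nlinarith [norm_nonneg u]
      · intro h
        nlinarith [norm_nonneg u, hR]
    have hval : G₀ u = 1 / (a ^ 2 +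
        (y + b * ((θ u).1 / Real.sqrt (1 + ((θ u).1 ^ 2 + ∑ j, (θ u).2 j ^ 2)))) ^ 2) := by
      rw [hθu, hG₀def]
      simp only
      rw [hsum u, inv_mul_eq_div]
    by_cases h : u ∈ {u : EuclideanSpace ℝ (Fin 3) | ‖u‖ ≤ R}
    · rw [Set.indicator_of_mem h, hFdef]
      simp only
      rw [if_pos (hmem.1 h), hval]
    · rw [Set.indicator_of_notMem h, hFdef]
      simp only
      rw [if_neg (fun hh => h (hmem.2 hh))]
  have hstep1 : (∫⁻ u in {u : EuclideanSpace ℝ (Fin 3) | ‖u‖ ≤ R}, ENNReal.ofReal (G₀ u))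
      = ∫⁻ p : ℝ × (Fin 2 → ℝ), F p := by
    rw [← lintegral_indicator hSmeas, lintegral_congr hFθ]
    have h2 := hθmp.setLIntegral_comp_preimage_emb θ.measurableEmbedding F Set.univ
    rw [Set.preimage_univ, Measure.restrict_univ, Measure.restrict_univ] at h2
    exact h2
  rw [hstep1]
  refine le_trans (my_prod a b y R ha hb) (ENNReal.ofReal_le_ofReal ?_)
  -- numeric estimate
  have hRpos : (0 : ℝ) < R := by linarith
  have hs1 : Real.sqrt (1 + R ^ 2) ≤ 3 / 2 * R := by
    have h1 : (1 + R ^ 2) ≤ (3 / 2 * R) ^ 2 := by nlinarith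
    calc Real.sqrt (1 + R ^ 2) ≤ Real.sqrt ((3 / 2 * R) ^ 2) := Real.sqrt_le_sqrt h1
      _ = 3 / 2 * R := Real.sqrt_sq (by linarith)
  have hmain : 4 * ((1 + R ^ 2) * Real.sqrt (1 + R ^ 2)) ≤ 12 * R ^ 3 := by
    have h2 : (1 + R ^ 2) ≤ 2 * R ^ 2 := by nlinarith
    have h3 : (1 + R ^ 2) * Real.sqrt (1 + R ^ 2) ≤ (2 * R ^ 2) * (3 / 2 * R) :=
      mul_le_mul h2 hs1 (Real.sqrt_nonneg _) (by positivity)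
    calc 4 * ((1 + R ^ 2) * Real.sqrt (1 + R ^ 2)) ≤ 4 * ((2 * R ^ 2) * (3 / 2 * R)) := by
          linarith
      _ = 12 * R ^ 3 := by ring
  have hπab : π / (a * b) ≤ π / (δ * b) := by
    apply div_le_div_of_nonneg_left pi_pos.le (by positivity) ?_
    · nlinarith
  calc 4 * ((1 + R ^ 2) * Real.sqrt (1 + R ^ 2)) * (π / (a * b))
      ≤ (12 * R ^ 3) * (π / (δ * b)) := by
        apply mul_le_mul hmain hπab (by positivity) (by positivity)
    _ = 12 * π / δ * R ^ 3 / b := by field_simp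
end
end

section
/- For any τ₀ > 0, ξ > 0, c > 0, and all sufficiently large t, ∫_{|k| ≤ τ₀} e^{−2ξ|k|² t} sin²(c|k|t) dk ≥ C (1+t)^{−3/2} for some constant C > 0 depending only on τ₀, ξ, c. -/
open MeasureTheory Real

noncomputable section

lemma sin_sq_add_nat_mul_pi (y : ℝ) (n : ℕ) : Real.sin (y + n * π) ^ 2 = Real.sin y ^ 2 := by
  rw [Real.sin_add_nat_mul_pi]
  rw [mul_pow, ← pow_mul, mul_comm n 2, pow_mul, neg_one_sq, one_pow, one_mul]

lemma sin_sq_ge_half {x : ℝ} (n : ℕ) (h1 : n * π + π/4 ≤ x) (h2 : x ≤ n * π + 3*π/4) :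
    (1:ℝ)/2 ≤ Real.sin x ^ 2 := by
  have hx : x = (x - n * π) + n * π := by ring
  rw [hx, sin_sq_add_nat_mul_pi]
  set y := x - n * π with hy
  have hy1 : π/4 ≤ y := by simp [hy]; linarith
  have hy2 : y ≤ 3*π/4 := by simp [hy]; linarith
  have hsin : Real.sin y = Real.cos (π/2 - y) := (Real.cos_pi_div_two_sub y).symm
  have habs : |π/2 - y| ≤ π/4 := by
    rw [abs_le]; constructor <;> linarith
  have hcos : Real.cos (π/4) ≤ Real.cos (|π/2 - y|) :=
    Real.cos_le_cos_of_nonneg_of_le_pi (abs_nonneg _)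
      (by linarith [Real.pi_pos]) habs
  rw [Real.cos_abs] at hcos
  have h24 : Real.cos (π/4) = Real.sqrt 2 / 2 := Real.cos_pi_div_four
  have hsge : Real.sqrt 2 / 2 ≤ Real.sin y := by rw [hsin]; rw [h24] at hcos; exact hcos
  have hnn : (0:ℝ) ≤ Real.sqrt 2 / 2 := by positivity
  have := pow_le_pow_left₀ hnn hsge 2
  have h2 : (Real.sqrt 2 / 2) ^ 2 = 1/2 := by
    rw [div_pow, Real.sq_sqrt (by norm_num : (0:ℝ) ≤ 2)]; norm_num
  linarith [this, h2.symm ▸ this]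

set_option maxHeartbeats 2000000 in
/-- for all sufficiently large `t`,
`∫_{|k|≤τ₀} e^{−2ξ|k|²t} sin²(c|k|t) dk ≥ C (1+t)^{−3/2}`. -/
theorem sin_sq_gaussian_lower_bound (τ₀ ξ c : ℝ) (hτ₀ : 0 < τ₀) (hξ : 0 < ξ)
    (hc : 0 < c) :
    ∃ C > 0, ∃ t₀ : ℝ, ∀ t : ℝ, t₀ ≤ t →
      C * (1 + t) ^ (-(3 : ℝ) / 2) ≤
        ∫ k in {k : EuclideanSpace ℝ (Fin 3) | ‖k‖ ≤ τ₀},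
          Real.exp (-2 * ξ * ‖k‖ ^ 2 * t) * Real.sin (c * ‖k‖ * t) ^ 2 := by
  classical
  set E := EuclideanSpace ℝ (Fin 3)
  have hπ := Real.pi_pos
  set V : ℝ := (volume (Metric.ball (0 : E) 1)).toReal with hVdef
  have hV : 0 < V := by
    apply ENNReal.toReal_pos (Metric.measure_ball_pos volume _ one_pos).ne'
      measure_ball_lt_top.ne
  refine ⟨3/256 * Real.exp (-2*ξ) * V, by positivity,
    max (max 1 (τ₀⁻¹^2)) ((4*π/c)^2), fun t ht => ?_⟩
  have ht1 : (1:ℝ) ≤ t := le_trans (le_trans (le_max_left _ _) (le_max_left _ _)) ht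
  have ht0 : (0:ℝ) < t := by linarith
  have htτ : τ₀⁻¹^2 ≤ t := le_trans (le_trans (le_max_right _ _) (le_max_left _ _)) ht
  have htc : (4*π/c)^2 ≤ t := le_trans (le_max_right _ _) ht
  set s : ℝ := Real.sqrt t with hsdef
  have hs0 : 0 < s := Real.sqrt_pos.2 ht0
  have hst : s^2 = t := Real.sq_sqrt ht0.le
  have hs1 : 1 ≤ s := by
    rw [hsdef, show (1:ℝ) = Real.sqrt 1 by simp]
    exact Real.sqrt_le_sqrt ht1
  -- 1/s ≤ τ₀
  have hsτ : 1/s ≤ τ₀ := by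
    have : τ₀⁻¹ ≤ s := by
      rw [hsdef, show τ₀⁻¹ = Real.sqrt (τ₀⁻¹^2) by
        rw [Real.sqrt_sq (by positivity)]]
      exact Real.sqrt_le_sqrt htτ
    rw [div_le_iff₀ hs0]
    calc (1:ℝ) = τ₀ * τ₀⁻¹ := by field_simp
    _ ≤ τ₀ * s := by gcongr
  have hcs : 4*π ≤ c * s := by
    have : 4*π/c ≤ s := by
      rw [hsdef, show 4*π/c = Real.sqrt ((4*π/c)^2) by
        rw [Real.sqrt_sq (by positivity)]]
      exact Real.sqrt_le_sqrt htc
    calc 4*π = c * (4*π/c) := by field_simp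
    _ ≤ c * s := by gcongr
  set N : ℕ := ⌊c * s / (2*π)⌋₊ with hNdef
  have hNub : (N:ℝ) ≤ c * s / (2*π) := Nat.floor_le (by positivity)
  have hNlb : c * s / (4*π) ≤ (N:ℝ) := by
    have h1 : c * s / (2*π) < N + 1 := Nat.lt_floor_add_one _
    have h2 : (2:ℝ) ≤ c * s / (2*π) := by
      rw [le_div_iff₀ (by positivity)]; linarith
    have h3 : c * s / (4*π) = (c * s / (2*π))/2 := by
      field_simp; ring
    rw [h3]; linarith
  have hN1 : 1 ≤ N := by
    have : (1:ℝ) ≤ (N:ℝ) := le_trans (by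
      rw [le_div_iff₀ (by positivity)]; linarith) hNlb
    exact_mod_cast this
  have hct : 0 < c * t := by positivity
  -- annuli
  set a : ℕ → ℝ := fun n => ((n:ℝ) * π + π/4) / (c*t) with hadef
  set b : ℕ → ℝ := fun n => ((n:ℝ) * π + 3*π/4) / (c*t) with hbdef
  have ha_pos : ∀ n, 0 < a n := fun n => by
    simp only [hadef]; positivity
  have hab : ∀ n, a n ≤ b n := fun n => by
    simp only [hadef, hbdef]
    gcongr
    linarith
  set A : ℕ → Set E := fun n => Metric.closedBall (0:E) (b n) \ Metric.ball (0:E) (a n)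
    with hAdef
  have hb_small : ∀ n, n < 2*N → b n ≤ 1/s := by
    intro n hn
    have hn' : (n:ℝ) + 1 ≤ 2*(N:ℝ) := by exact_mod_cast hn
    have h2N : (N:ℝ) * (2*π) ≤ c*s := (le_div_iff₀ (by positivity)).mp hNub
    have hnum : (n:ℝ) * π + 3*π/4 ≤ c * s := by nlinarith
    rw [hbdef, div_le_div_iff₀ hct hs0]
    have hts : c * t = (c*s)*s := by rw [← hst]; ring
    nlinarith [mul_le_mul_of_nonneg_right hnum hs0.le]
  have hA_bound : ∀ n, n < 2*N → ∀ k : E, k ∈ A n →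
      ‖k‖ ≤ τ₀ ∧ Real.exp (-2*ξ) * (1/2) ≤
        Real.exp (-2 * ξ * ‖k‖ ^ 2 * t) * Real.sin (c * ‖k‖ * t) ^ 2 := by
    intro n hn k hk
    obtain ⟨hk1, hk2⟩ := hk
    rw [Metric.mem_closedBall, dist_zero_right] at hk1
    rw [Metric.mem_ball, dist_zero_right, not_lt] at hk2
    have hbs := hb_small n hn
    refine ⟨hk1.trans (hbs.trans hsτ), ?_⟩
    have hr2 : ‖k‖^2 * t ≤ 1 := by
      have h1 : ‖k‖ ≤ 1/s := hk1.trans hbs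
      have h2 : (1/s)^2 * t = 1 := by rw [← hst]; field_simp
      have h3 : ‖k‖^2 ≤ (1/s)^2 := pow_le_pow_left₀ (norm_nonneg k) h1 2
      have h4 := mul_le_mul_of_nonneg_right h3 ht0.le
      linarith
    have hexp : Real.exp (-2*ξ) ≤ Real.exp (-2 * ξ * ‖k‖^2 * t) := by
      apply Real.exp_le_exp.2
      nlinarith
    have hform : c*‖k‖*t = ‖k‖ * (c*t) := by ring
    have hl : (n:ℝ)*π + π/4 ≤ c*‖k‖*t := by
      have h := mul_le_mul_of_nonneg_right hk2 hct.le
      have ha' : a n * (c*t) = (n:ℝ)*π + π/4 := by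
        simp only [hadef]; field_simp
      rw [ha'] at h
      rw [hform]
      exact h
    have hu : c*‖k‖*t ≤ (n:ℝ)*π + 3*π/4 := by
      have h := mul_le_mul_of_nonneg_right hk1 hct.le
      have hb' : b n * (c*t) = (n:ℝ)*π + 3*π/4 := by
        simp only [hbdef]; field_simp
      rw [hb'] at h
      rw [hform]
      exact h
    have hsin : (1:ℝ)/2 ≤ Real.sin (c*‖k‖*t)^2 := sin_sq_ge_half n hl hu
    exact mul_le_mul hexp hsin (by norm_num) (Real.exp_nonneg _)
  have hAmeas : ∀ n, MeasurableSet (A n) := fun n =>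
    measurableSet_closedBall.diff measurableSet_ball
  have hdisj_lt : ∀ m n : ℕ, m < n → Disjoint (A m) (A n) := by
    intro m n h
    have hmn' : (m:ℝ) + 1 ≤ n := by exact_mod_cast h
    have hba : b m < a n := by
      simp only [hbdef, hadef]
      rw [div_lt_div_iff_of_pos_right hct]
      nlinarith
    rw [Set.disjoint_left]
    intro k hkm hkn
    obtain ⟨hk1, -⟩ := hkm
    obtain ⟨-, hk2⟩ := hkn
    exact hk2 (Metric.mem_ball.2 (lt_of_le_of_lt (Metric.mem_closedBall.1 hk1) hba))
  have hdisj : (↑(Finset.Ico N (2*N)) : Set ℕ).PairwiseDisjoint A := by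
    intro m _ n _ hmn
    rcases lt_or_gt_of_ne hmn with h | h
    · exact hdisj_lt m n h
    · exact (hdisj_lt n m h).symm
  have hvol : ∀ n, (volume (A n)).toReal = ((b n)^3 - (a n)^3) * V := by
    intro n
    have hsub : Metric.ball (0:E) (a n) ⊆ Metric.closedBall (0:E) (b n) :=
      Metric.ball_subset_closedBall.trans (Metric.closedBall_subset_closedBall (hab n))
    rw [hAdef]
    simp only
    rw [measure_diff hsub measurableSet_ball.nullMeasurableSet measure_ball_lt_top.ne,
      ENNReal.toReal_sub_of_le (measure_mono hsub) measure_closedBall_lt_top.ne,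
      Measure.addHaar_closedBall volume (0:E) ((ha_pos n).le.trans (hab n)),
      Measure.addHaar_ball volume (0:E) (ha_pos n).le]
    rw [show Module.finrank ℝ E = 3 from finrank_euclideanSpace_fin]
    rw [ENNReal.toReal_mul, ENNReal.toReal_mul,
      ENNReal.toReal_ofReal (by positivity), ENNReal.toReal_ofReal (by positivity)]
    ring
  set G : Set E := ⋃ n ∈ Finset.Ico N (2*N), A n with hGdef
  have hGmeas : MeasurableSet G :=
    (Finset.Ico N (2*N)).measurableSet_biUnion fun n _ => hAmeas n
  have hDeq : {k : E | ‖k‖ ≤ τ₀} = Metric.closedBall (0:E) τ₀ := by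
    ext k; rw [Set.mem_setOf_eq, mem_closedBall_zero_iff]
  have hGD : G ⊆ Metric.closedBall (0:E) τ₀ := by
    intro k hk
    simp only [hGdef, Set.mem_iUnion, exists_prop] at hk
    obtain ⟨n, hn, hkA⟩ := hk
    rw [mem_closedBall_zero_iff]
    exact (hA_bound n (Finset.mem_Ico.1 hn).2 k hkA).1
  have hGfin : volume G ≠ ⊤ :=
    ((measure_mono hGD).trans_lt measure_closedBall_lt_top).ne
  have hGvol : volume G = ∑ n ∈ Finset.Ico N (2*N), volume (A n) :=
    measure_biUnion_finset hdisj fun n _ => hAmeas n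
  have hAfin : ∀ n ∈ Finset.Ico N (2*N), volume (A n) ≠ ⊤ := fun n _ =>
    ((measure_mono (Set.diff_subset)).trans_lt measure_closedBall_lt_top).ne
  have hGvolR : (volume G).toReal = ∑ n ∈ Finset.Ico N (2*N), (volume (A n)).toReal := by
    rw [hGvol, ENNReal.toReal_sum hAfin]
  set w : ℝ := 3 * ((N:ℝ)*π/(c*t))^2 * (π/(2*(c*t))) * V with hwdef
  have hterm : ∀ n ∈ Finset.Ico N (2*N), w ≤ (volume (A n)).toReal := by
    intro n hn
    obtain ⟨hn1, -⟩ := Finset.mem_Ico.1 hn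
    have hn1' : (N:ℝ) ≤ n := by exact_mod_cast hn1
    rw [hvol n]
    have haN : (N:ℝ)*π/(c*t) ≤ a n := by
      simp only [hadef]
      rw [div_le_div_iff_of_pos_right hct]
      nlinarith
    have hba : b n - a n = π/(2*(c*t)) := by
      rw [hbdef, hadef]
      field_simp
      ring
    have h3 : 3*(a n)^2*(b n - a n) ≤ (b n)^3 - (a n)^3 := by
      nlinarith [mul_nonneg (mul_nonneg (sub_nonneg.2 (hab n)) (sub_nonneg.2 (hab n)))
        (by positivity : (0:ℝ) ≤ b n + 2 * a n), ha_pos n, hab n]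
    have hd0 : (0:ℝ) ≤ (N:ℝ)*π/(c*t) := by positivity
    have h4 : 3 * ((N:ℝ)*π/(c*t))^2 * (π/(2*(c*t))) ≤ 3*(a n)^2*(b n - a n) := by
      rw [hba]
      gcongr
    rw [hwdef]
    exact mul_le_mul_of_nonneg_right (h4.trans h3) hV.le
  have hsum : (N:ℝ) * w ≤ (volume G).toReal := by
    rw [hGvolR]
    have h := Finset.card_nsmul_le_sum (Finset.Ico N (2*N)) _ _ hterm
    rwa [Nat.card_Ico, show 2*N - N = N by omega, nsmul_eq_mul] at h
  have hkey : 3/128 * (s^3/t^3) * V ≤ (N:ℝ) * w := by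
    have hNc : (c*s/(4*π))^3 ≤ (N:ℝ)^3 := by
      gcongr
    have hw : (N:ℝ) * w = (3*π^3/2) * ((N:ℝ)^3/(c*t)^3) * V := by
      rw [hwdef]; field_simp
    have h5 : (3*π^3/2) * ((c*s/(4*π))^3/(c*t)^3) * V ≤ (3*π^3/2) * ((N:ℝ)^3/(c*t)^3) * V := by
      gcongr
    have h6 : (3*π^3/2) * ((c*s/(4*π))^3/(c*t)^3) * V = 3/128 * (s^3/t^3) * V := by
      field_simp
      ring
    rw [hw]
    rw [h6] at h5
    exact h5
  set f : EuclideanSpace ℝ (Fin 3) → ℝ :=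
    fun k => Real.exp (-2 * ξ * ‖k‖ ^ 2 * t) * Real.sin (c * ‖k‖ * t) ^ 2 with hfdef
  have hf_cont : Continuous f := by
    rw [hfdef]; fun_prop
  have hfint : IntegrableOn f (Metric.closedBall (0:E) τ₀) :=
    hf_cont.continuousOn.integrableOn_compact (isCompact_closedBall _ _)
  have hfnn : ∀ k, 0 ≤ f k := fun k => by rw [hfdef]; positivity
  have hI1 : ∫ k in G, f k ≤ ∫ k in Metric.closedBall (0:E) τ₀, f k :=
    setIntegral_mono_set hfint (Filter.Eventually.of_forall hfnn)
      (HasSubset.Subset.eventuallyLE hGD)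
  have hI2 : (Real.exp (-2*ξ) * (1/2)) * (volume G).toReal ≤ ∫ k in G, f k := by
    rw [mul_comm, ← smul_eq_mul]
    apply setIntegral_ge_of_const_le hGmeas hGfin _ (hfint.mono_set hGD)
    intro k hk
    simp only [hGdef, Set.mem_iUnion, exists_prop] at hk
    obtain ⟨n, hn, hkA⟩ := hk
    exact (hA_bound n (Finset.mem_Ico.1 hn).2 k hkA).2
  have hrpow : (1+t) ^ (-(3:ℝ)/2) ≤ s^3/t^3 := by
    have h1 : (1+t) ^ (-(3:ℝ)/2) ≤ t ^ (-(3:ℝ)/2) :=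
      Real.rpow_le_rpow_of_nonpos ht0 (by linarith) (by norm_num)
    have h2 : s^3/t^3 = t ^ (-(3:ℝ)/2) := by
      rw [hsdef, Real.sqrt_eq_rpow, ← Real.rpow_natCast (t ^ ((1:ℝ)/2)) 3,
        ← Real.rpow_mul ht0.le, ← Real.rpow_natCast t 3, ← Real.rpow_sub ht0]
      norm_num
    rw [← h2] at h1
    exact h1
  rw [hDeq]
  calc 3/256 * Real.exp (-2*ξ) * V * ((1+t) ^ (-(3:ℝ)/2))
      ≤ 3/256 * Real.exp (-2*ξ) * V * (s^3/t^3) := by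
        gcongr
    _ = (Real.exp (-2*ξ) * (1/2)) * (3/128 * (s^3/t^3) * V) := by ring
    _ ≤ (Real.exp (-2*ξ) * (1/2)) * ((N:ℝ) * w) := by
        gcongr
    _ ≤ (Real.exp (-2*ξ) * (1/2)) * (volume G).toReal := by
        gcongr
    _ ≤ ∫ k in G, f k := hI2
    _ ≤ ∫ k in Metric.closedBall (0:E) τ₀, f k := hI1
end
end

section
/- Suppose D₁ : ℂ × ℝ → ℂ satisfies D₁(−β, s) = D₁(β, −s) and conj(D₁(β, s)) = D₁(conj(β), s), and β_j(s) (j = −1, 0, 1) are the unique local solutions of D₁(β, s) = 0 near −iu_j with u₋₁ = −u₁ real and u₀ = 0. Then −β_j(−s) = conj(β_j(s)) = β_{−j}(s) for j = −1, 0, 1 and |s| ≤ τ₀. -/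
noncomputable section

/-- symmetry of the eigenvalue branches. If `D₁(−β,s) = D₁(β,−s)` and
`conj(D₁(β,s)) = D₁(conj β, s)`, and `B j` (`j = 0,1,2` encoding `j = −1,0,1`) are the
unique local solution branches of `D₁(β,s) = 0` near `−iu_j` with
`(u₋₁,u₀,u₁) = (−u,0,u)`, then `−β_j(−s) = conj(β_j(s)) = β_{−j}(s)`. -/
theorem branch_symmetry (u τ₀ r₁ : ℝ) (hu : 0 < u) (hτ₀ : 0 < τ₀) (hr₁ : 0 < r₁)
    (D₁ : ℂ → ℝ → ℂ)
    (hsym1 : ∀ (β : ℂ) (s : ℝ), D₁ (-β) s = D₁ β (-s))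
    (hsym2 : ∀ (β : ℂ) (s : ℝ), starRingEnd ℂ (D₁ β s) = D₁ (starRingEnd ℂ β) s)
    (uv : Fin 3 → ℝ) (huv : uv = ![-u, 0, u])
    (B : Fin 3 → ℝ → ℂ)
    (hsol : ∀ (j : Fin 3) (s : ℝ), s ∈ Set.Icc (-τ₀) τ₀ →
      D₁ (B j s) s = 0 ∧ B j s ∈ Metric.ball (-(Complex.I * (uv j : ℂ))) r₁)
    (huniq : ∀ (j : Fin 3) (s : ℝ), s ∈ Set.Icc (-τ₀) τ₀ →
      ∀ β ∈ Metric.ball (-(Complex.I * (uv j : ℂ))) r₁, D₁ β s = 0 → β = B j s) :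
    ∀ (j : Fin 3) (s : ℝ), s ∈ Set.Icc (-τ₀) τ₀ →
      -(B j (-s)) = starRingEnd ℂ (B j s) ∧
      starRingEnd ℂ (B j s) = B (⟨2 - j.val, by omega⟩ : Fin 3) s := by
  intro j s hs
  have hs' : -s ∈ Set.Icc (-τ₀) τ₀ := by
    simp only [Set.mem_Icc] at hs ⊢
    constructor <;> linarith [hs.1, hs.2]
  set j' : Fin 3 := ⟨2 - j.val, by omega⟩ with hj'
  have huvj : (uv j' : ℂ) = -(uv j : ℂ) := by
    subst huv
    fin_cases j <;> simp [hj']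
  have hcenter : -(Complex.I * (uv j' : ℂ)) = Complex.I * (uv j : ℂ) := by
    rw [huvj]; ring
  obtain ⟨hD1, hb1⟩ := hsol j (-s) hs'
  obtain ⟨hD2, hb2⟩ := hsol j s hs
  have h1 : -(B j (-s)) = B j' s := by
    apply huniq j' s hs
    · rw [Metric.mem_ball, hcenter] at *
      calc dist (-(B j (-s))) (Complex.I * (uv j : ℂ))
          = dist (B j (-s)) (-(Complex.I * (uv j : ℂ))) := by
            rw [← dist_neg_neg, neg_neg]
        _ < r₁ := hb1
    · rw [hsym1]; exact hD1
  have h2 : starRingEnd ℂ (B j s) = B j' s := by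
    apply huniq j' s hs
    · rw [Metric.mem_ball, hcenter]
      have : Complex.I * (uv j : ℂ) = starRingEnd ℂ (-(Complex.I * (uv j : ℂ))) := by
        simp [Complex.conj_ofReal]
      rw [this, Complex.dist_eq, ← map_sub, Complex.norm_conj, ← Complex.dist_eq]
      exact hb2
    · rw [← hsym2, hD2, map_zero]
  exact ⟨h1.trans h2.symm, h2⟩
end
end

section
/- Let K be a compact operator on a Hilbert space H and suppose (k_n, λ_n, φ_n) satisfy (λ_n + ν + i v̂·k_n)φ_n = Kφ_n with ‖φ_n‖ = 1, k_n → k₀, λ_n → λ₀ where Re λ₀ + ν(v) ≥ δ > 0 pointwise. Then, along a subsequence, φ_n converges in H to some φ₀ with ‖φ₀‖ = 1 satisfying (λ₀ + ν + i v̂·k₀)φ₀ = Kφ₀; i.e., λ₀ is an eigenvalue of the operator f ↦ Kf − (ν + i v̂·k₀)f. -/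
open MeasureTheory Real Filter
open scoped RealInnerProductSpace

noncomputable section

abbrev Hsp := MeasureTheory.Lp ℂ 2 (volume : Measure (EuclideanSpace ℝ (Fin 3)))

abbrev Esp := EuclideanSpace ℝ (Fin 3)

lemma vhat_continuous : Continuous vhat := by
  refine Continuous.smul (f := fun u : Esp => (Real.sqrt (1 + ‖u‖ ^ 2))⁻¹) (g := id) ?_ ?_
  · exact ((continuous_const.add ((continuous_norm).pow 2)).sqrt).inv₀
      (fun u => ne_of_gt (Real.sqrt_pos.mpr (by positivity : (0:ℝ) < 1 + ‖u‖ ^ 2)))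
  · exact continuous_id

def mf (ν : Esp → ℝ) (l : ℂ) (k : Esp) (v : Esp) : ℂ :=
  l + (ν v : ℂ) + Complex.I * ((inner ℝ k (vhat v) : ℝ) : ℂ)

lemma mf_meas (ν : Esp → ℝ) (hνm : Measurable ν) (l : ℂ) (k : Esp) :
    Measurable (mf ν l k) := by
  unfold mf
  apply Measurable.add
  · exact measurable_const.add (Complex.measurable_ofReal.comp hνm)
  · exact (Complex.measurable_ofReal.comp
      ((continuous_const.inner vhat_continuous).measurable)).const_mul _

lemma mf_re (ν : Esp → ℝ) (l : ℂ) (k : Esp) (v : Esp) :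
    (mf ν l k v).re = l.re + ν v := by
  simp [mf]

lemma inv_norm_le {z : ℂ} {d : ℝ} (hd : 0 < d) (h : d ≤ z.re) :
    z ≠ 0 ∧ ‖z⁻¹‖ ≤ d⁻¹ := by
  have hz : d ≤ ‖z‖ := h.trans (Complex.re_le_norm z)
  have hz0 : z ≠ 0 := by
    intro h0
    rw [h0] at hz; simp at hz; linarith
  refine ⟨hz0, ?_⟩
  rw [norm_inv]
  exact inv_anti₀ hd hz

set_option maxHeartbeats 1000000 in
set_option synthInstance.maxHeartbeats 400000 in
/-- the compactness argument. If `K` is compact on `L²(ℝ³_v)`,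
`(λ_n + ν + i v̂·k_n)φ_n = Kφ_n` with `‖φ_n‖ = 1`, `k_n → k₀`, `λ_n → λ₀`, and
`Re λ₀ + ν(v) ≥ δ > 0`, then along a subsequence `φ_n → φ₀` with `‖φ₀‖ = 1` and
`(λ₀ + ν + i v̂·k₀)φ₀ = Kφ₀`. -/
theorem compactness_eigenvalue_limit (c₀ δ : ℝ) (hc₀ : 0 < c₀) (hδ : 0 < δ)
    (ν : EuclideanSpace ℝ (Fin 3) → ℝ) (hνm : Measurable ν) (hν : ∀ v, c₀ ≤ ν v)
    (K : Hsp →L[ℂ] Hsp) (hK : IsCompactOperator ⇑K)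
    (kseq : ℕ → EuclideanSpace ℝ (Fin 3)) (lamseq : ℕ → ℂ) (φ : ℕ → Hsp)
    (hnorm : ∀ n, ‖φ n‖ = 1)
    (heig : ∀ n,
      (fun v => (lamseq n + (ν v : ℂ) + Complex.I * ((inner ℝ (kseq n) (vhat v) : ℝ) : ℂ))
          * (φ n) v) =ᵐ[volume] ⇑(K (φ n)))
    (k₀ : EuclideanSpace ℝ (Fin 3)) (lam₀ : ℂ)
    (hkconv : Tendsto kseq atTop (nhds k₀))
    (hlamconv : Tendsto lamseq atTop (nhds lam₀))
    (hlow : ∀ v, δ ≤ lam₀.re + ν v) :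
    ∃ (φ₀ : Hsp) (s : ℕ → ℕ), StrictMono s ∧
      Tendsto (fun n => φ (s n)) atTop (nhds φ₀) ∧
      ‖φ₀‖ = 1 ∧
      (fun v => (lam₀ + (ν v : ℂ) + Complex.I * ((inner ℝ k₀ (vhat v) : ℝ) : ℂ)) * φ₀ v)
        =ᵐ[volume] ⇑(K φ₀) := by
  classical
  set ψ : ℕ → Hsp := fun n => K (φ n) with hψdef
  -- compactness : the sequence ψ lies in a compact set
  obtain ⟨C, hC, hCn⟩ := hK
  obtain ⟨ε, hε, hball⟩ := Metric.mem_nhds_iff.mp hCn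
  set c : ℂ := ((ε/2 : ℝ) : ℂ) with hcdef
  have hc0 : c ≠ 0 := by
    simp [hcdef, Complex.ofReal_ne_zero]
    positivity
  have hmem : ∀ n, ψ n ∈ (fun x => c⁻¹ • x) '' C := by
    intro n
    have h1 : c • φ n ∈ Metric.ball (0 : Hsp) ε := by
      rw [Metric.mem_ball, dist_zero_right, norm_smul, hnorm n]
      have hcn : ‖c‖ = ε/2 := by
        rw [hcdef, Complex.norm_real, Real.norm_eq_abs, abs_of_pos (half_pos hε)]
      rw [hcn]
      linarith
    have h2 : K (c • φ n) ∈ C := hball h1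
    rw [_root_.map_smul] at h2
    exact ⟨c • ψ n, h2, by show c⁻¹ • (c • ψ n) = ψ n; rw [smul_smul, inv_mul_cancel₀ hc0, one_smul]⟩
  have hD : IsCompact ((fun x => c⁻¹ • x) '' C) := hC.image (continuous_const_smul _)
  -- tail index
  obtain ⟨N, hN⟩ := (Metric.tendsto_atTop.mp hlamconv (δ/2) (by positivity))
  -- extract convergent subsequence of ψ (· + N)
  obtain ⟨ψ₀, -, s, hs, hψconv⟩ := hD.tendsto_subseq (fun n => hmem (n + N))
  set t : ℕ → ℕ := fun n => s n + N with htdef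
  have ht : StrictMono t := fun a b h => by
    simp only [htdef]; exact add_lt_add_left (hs h) N
  have htN : ∀ n, N ≤ t n := fun n => le_add_self
  have hψt : Tendsto (fun n => ψ (t n)) atTop (nhds ψ₀) := hψconv
  have hlam_t : Tendsto (fun n => lamseq (t n)) atTop (nhds lam₀) :=
    hlamconv.comp (ht.tendsto_atTop)
  have hk_t : Tendsto (fun n => kseq (t n)) atTop (nhds k₀) :=
    hkconv.comp (ht.tendsto_atTop)
  -- properties of multipliers
  have hm₀ : ∀ v, mf ν lam₀ k₀ v ≠ 0 ∧ ‖(mf ν lam₀ k₀ v)⁻¹‖ ≤ δ⁻¹ := by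
    intro v
    exact inv_norm_le hδ (by rw [mf_re]; exact hlow v)
  have hmt : ∀ n v, mf ν (lamseq (t n)) (kseq (t n)) v ≠ 0 ∧
      ‖(mf ν (lamseq (t n)) (kseq (t n)) v)⁻¹‖ ≤ (δ/2)⁻¹ := by
    intro n v
    apply inv_norm_le (by positivity)
    rw [mf_re]
    have h1 : dist (lamseq (t n)) lam₀ < δ/2 := hN _ (htN n)
    have h2 : |(lamseq (t n) - lam₀).re| ≤ ‖lamseq (t n) - lam₀‖ :=
      Complex.abs_re_le_norm _
    rw [Complex.dist_eq] at h1
    rw [Complex.sub_re] at h2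
    have := hlow v
    rw [abs_le] at h2
    linarith [h2.1]
  -- the candidate limit
  set g : Esp → ℂ := fun v => (mf ν lam₀ k₀ v)⁻¹ * ψ₀ v with hgdef
  have hg_meas : AEStronglyMeasurable g volume :=
    ((mf_meas ν hνm lam₀ k₀).inv.aestronglyMeasurable).mul (Lp.aestronglyMeasurable ψ₀)
  have hg_mem : MemLp g 2 volume := by
    apply (Lp.memLp ψ₀).of_le_mul hg_meas
    filter_upwards with v
    rw [hgdef]
    simp only [norm_mul]
    exact mul_le_mul_of_nonneg_right (hm₀ v).2 (norm_nonneg _)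
  set φ₀ : Hsp := hg_mem.toLp g with hφ₀def
  have hφ₀ : ⇑φ₀ =ᵐ[volume] g := hg_mem.coeFn_toLp
  -- a.e. representation of φ (t n)
  have hrep : ∀ n, ⇑(φ (t n)) =ᵐ[volume]
      fun v => (mf ν (lamseq (t n)) (kseq (t n)) v)⁻¹ * ψ (t n) v := by
    intro n
    filter_upwards [heig (t n)] with v hv
    have h0 := (hmt n v).1
    have hv' : mf ν (lamseq (t n)) (kseq (t n)) v * (φ (t n)) v = ψ (t n) v := hv
    rw [← hv', inv_mul_cancel_left₀ h0]
  -- the two pieces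
  set A : ℕ → Esp → ℂ := fun n v =>
    (mf ν (lamseq (t n)) (kseq (t n)) v)⁻¹ * (ψ (t n) v - ψ₀ v) with hAdef
  set B : ℕ → Esp → ℂ := fun n v =>
    ((mf ν (lamseq (t n)) (kseq (t n)) v)⁻¹ - (mf ν lam₀ k₀ v)⁻¹) * ψ₀ v with hBdef
  have hA_meas : ∀ n, AEStronglyMeasurable (A n) volume := fun n =>
    ((mf_meas ν hνm _ _).inv.aestronglyMeasurable).mul
      ((Lp.aestronglyMeasurable (ψ (t n))).sub (Lp.aestronglyMeasurable ψ₀))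
  have hB_meas : ∀ n, AEStronglyMeasurable (B n) volume := fun n =>
    (((mf_meas ν hνm _ _).inv.sub (mf_meas ν hνm lam₀ k₀).inv).aestronglyMeasurable).mul
      (Lp.aestronglyMeasurable ψ₀)
  have hsplit : ∀ n, (⇑(φ (t n)) - g) =ᵐ[volume] (A n + B n) := by
    intro n
    filter_upwards [hrep n] with v hv
    simp only [Pi.sub_apply, Pi.add_apply, hAdef, hBdef, hgdef]
    rw [hv]
    ring
  set E : ℕ → ENNReal := fun n => eLpNorm (⇑(φ (t n)) - g) 2 volume with hEdef
  -- A piece bound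
  have hA_le : ∀ n, eLpNorm (A n) 2 volume ≤
      ENNReal.ofReal ((δ/2)⁻¹) * ENNReal.ofReal ‖ψ (t n) - ψ₀‖ := by
    intro n
    have hb : ∀ᵐ v ∂(volume : Measure Esp),
        ‖A n v‖ ≤ (δ/2)⁻¹ * ‖(⇑(ψ (t n)) - ⇑ψ₀) v‖ := by
      filter_upwards with v
      simp only [hAdef, Pi.sub_apply, norm_mul]
      exact mul_le_mul_of_nonneg_right (hmt n v).2 (norm_nonneg _)
    refine (eLpNorm_le_mul_eLpNorm_of_ae_le_mul hb 2).trans ?_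
    gcongr
    rw [Lp.norm_def, ENNReal.ofReal_toReal (Lp.eLpNorm_ne_top _)]
    exact le_of_eq (eLpNorm_congr_ae (Lp.coeFn_sub _ _)).symm
  -- B piece tends to zero (dominated convergence)
  have hψ₀mem := Lp.memLp ψ₀
  have hψ₀fin : ∫⁻ v, (‖ψ₀ v‖₊ : ENNReal) ^ (2:ℝ) ∂volume ≠ ⊤ := by
    have h1 := Lp.eLpNorm_ne_top ψ₀
    rw [eLpNorm_eq_lintegral_rpow_enorm_toReal (by norm_num) (by norm_num)] at h1
    simp only [ENNReal.toReal_ofNat, enorm_eq_nnnorm] at h1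
    intro hcon
    rw [hcon] at h1
    rw [ENNReal.top_rpow_of_pos (by norm_num)] at h1
    exact h1 rfl
  have hBlim : Tendsto (fun n => eLpNorm (B n) 2 volume) atTop (nhds 0) := by
    have hlint : Tendsto (fun n => ∫⁻ v, (‖B n v‖₊ : ENNReal) ^ (2:ℝ) ∂volume) atTop
        (nhds (∫⁻ (_ : Esp), 0 ∂volume)) := by
      apply tendsto_lintegral_of_dominated_convergence'
        (bound := fun v => (ENNReal.ofReal (3/δ)) ^ (2:ℝ) * (‖ψ₀ v‖₊ : ENNReal) ^ (2:ℝ))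
      · intro n
        exact (ENNReal.continuous_rpow_const.measurable).comp_aemeasurable
          (hB_meas n).enorm
      · intro n
        filter_upwards with v
        have hb : ‖B n v‖ ≤ (3/δ) * ‖ψ₀ v‖ := by
          simp only [hBdef, norm_mul]
          apply mul_le_mul_of_nonneg_right _ (norm_nonneg _)
          calc ‖(mf ν (lamseq (t n)) (kseq (t n)) v)⁻¹ - (mf ν lam₀ k₀ v)⁻¹‖
              ≤ ‖(mf ν (lamseq (t n)) (kseq (t n)) v)⁻¹‖ + ‖(mf ν lam₀ k₀ v)⁻¹‖ :=
                norm_sub_le _ _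
            _ ≤ (δ/2)⁻¹ + δ⁻¹ := add_le_add (hmt n v).2 (hm₀ v).2
            _ = 3/δ := by field_simp; ring
        calc (‖B n v‖₊ : ENNReal) ^ (2:ℝ)
            = (ENNReal.ofReal ‖B n v‖) ^ (2:ℝ) := by
              rw [ofReal_norm_eq_enorm, enorm_eq_nnnorm]
          _ ≤ (ENNReal.ofReal ((3/δ) * ‖ψ₀ v‖)) ^ (2:ℝ) := by
              gcongr
          _ = (ENNReal.ofReal (3/δ)) ^ (2:ℝ) * (‖ψ₀ v‖₊ : ENNReal) ^ (2:ℝ) := by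
              rw [ENNReal.ofReal_mul (by positivity), ENNReal.mul_rpow_of_nonneg _ _ (by norm_num),
                ofReal_norm_eq_enorm, enorm_eq_nnnorm]
      · rw [lintegral_const_mul' _ _ (by simp)]
        exact ENNReal.mul_ne_top (by simp) hψ₀fin
      · filter_upwards with v
        have hmconv : Tendsto (fun n => mf ν (lamseq (t n)) (kseq (t n)) v) atTop
            (nhds (mf ν lam₀ k₀ v)) := by
          unfold mf
          apply Tendsto.add
          · exact hlam_t.add tendsto_const_nhds
          · apply Tendsto.const_mul
            apply Tendsto.comp (Complex.continuous_ofReal.tendsto _)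
            exact ((continuous_id.inner continuous_const).tendsto k₀).comp hk_t
        have hBv : Tendsto (fun n => B n v) atTop (nhds 0) := by
          have h1 : Tendsto (fun n => (mf ν (lamseq (t n)) (kseq (t n)) v)⁻¹ -
              (mf ν lam₀ k₀ v)⁻¹) atTop (nhds 0) := by
            have := (hmconv.inv₀ (hm₀ v).1).sub (tendsto_const_nhds
              (x := (mf ν lam₀ k₀ v)⁻¹))
            simpa using this
          have := h1.mul (tendsto_const_nhds (x := ψ₀ v))
          simpa [hBdef] using this
        have h2 : Tendsto (fun n => (‖B n v‖₊ : ENNReal)) atTop (nhds 0) := by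
          have := (continuous_nnnorm.tendsto (0:ℂ)).comp hBv
          simp only [nnnorm_zero] at this
          exact (ENNReal.tendsto_coe).mpr this
        have := ((ENNReal.continuous_rpow_const (y := (2:ℝ))).tendsto 0).comp h2
        simpa [ENNReal.zero_rpow_of_pos, Function.comp_def] using this
    rw [lintegral_zero] at hlint
    have := ((ENNReal.continuous_rpow_const (y := (2:ℝ)⁻¹)).tendsto 0).comp hlint
    simp only [Function.comp_def] at this
    have h0 : ((0:ENNReal) ^ ((2:ℝ)⁻¹)) = 0 := ENNReal.zero_rpow_of_pos (by norm_num)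
    rw [h0] at this
    convert this using 2 with n
    rw [eLpNorm_eq_lintegral_rpow_enorm_toReal (by norm_num) (by norm_num)]
    norm_num [enorm_eq_nnnorm]
  -- E tends to zero
  have hAlim : Tendsto (fun n => ENNReal.ofReal ((δ/2)⁻¹) * ENNReal.ofReal ‖ψ (t n) - ψ₀‖)
      atTop (nhds 0) := by
    have h1 : Tendsto (fun n => ‖ψ (t n) - ψ₀‖) atTop (nhds 0) :=
      tendsto_iff_norm_sub_tendsto_zero.mp hψt
    have h2 := ENNReal.tendsto_ofReal h1
    rw [ENNReal.ofReal_zero] at h2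
    have := ENNReal.Tendsto.const_mul h2 (Or.inr (by simp : ENNReal.ofReal ((δ/2)⁻¹) ≠ ⊤))
    simpa using this
  have hElim : Tendsto E atTop (nhds 0) := by
    have hle : ∀ n, E n ≤ ENNReal.ofReal ((δ/2)⁻¹) * ENNReal.ofReal ‖ψ (t n) - ψ₀‖ +
        eLpNorm (B n) 2 volume := by
      intro n
      rw [hEdef]
      calc eLpNorm (⇑(φ (t n)) - g) 2 volume
          = eLpNorm (A n + B n) 2 volume := eLpNorm_congr_ae (hsplit n)
        _ ≤ eLpNorm (A n) 2 volume + eLpNorm (B n) 2 volume :=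
            eLpNorm_add_le (hA_meas n) (hB_meas n) one_le_two
        _ ≤ _ := add_le_add_left (hA_le n) _
    have hsum : Tendsto (fun n => ENNReal.ofReal ((δ/2)⁻¹) * ENNReal.ofReal ‖ψ (t n) - ψ₀‖ +
        eLpNorm (B n) 2 volume) atTop (nhds 0) := by
      have := hAlim.add hBlim
      simpa using this
    exact tendsto_of_tendsto_of_tendsto_of_le_of_le tendsto_const_nhds hsum
      (fun n => zero_le) hle
  -- convergence of φ (t n) to φ₀ in Lp
  have hφconv : Tendsto (fun n => φ (t n)) atTop (nhds φ₀) := by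
    rw [tendsto_iff_norm_sub_tendsto_zero]
    have heq : ∀ n, ‖φ (t n) - φ₀‖ = (E n).toReal := by
      intro n
      rw [Lp.norm_def]
      congr 1
      apply eLpNorm_congr_ae
      filter_upwards [Lp.coeFn_sub (φ (t n)) φ₀, hφ₀] with v h1 h2
      rw [h1]
      simp [h2]
    simp only [heq]
    have := (ENNReal.tendsto_toReal (by simp : (0:ENNReal) ≠ ⊤)).comp hElim
    simpa [Function.comp_def] using this
  -- norm of φ₀
  have hφ₀norm : ‖φ₀‖ = 1 := by
    have h1 : Tendsto (fun n => ‖φ (t n)‖) atTop (nhds ‖φ₀‖) := hφconv.norm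
    simp only [hnorm] at h1
    exact tendsto_nhds_unique h1 tendsto_const_nhds
  -- K φ₀ = ψ₀
  have hKφ₀ : K φ₀ = ψ₀ :=
    tendsto_nhds_unique ((K.continuous.tendsto φ₀).comp hφconv) hψt
  refine ⟨φ₀, t, ht, hφconv, hφ₀norm, ?_⟩
  have : (fun v => mf ν lam₀ k₀ v * φ₀ v) =ᵐ[volume] ⇑(K φ₀) := by
    rw [hKφ₀]
    filter_upwards [hφ₀] with v hv
    rw [hv, hgdef]
    simp only
    rw [mul_inv_cancel_left₀ (hm₀ v).1]
  exact this
end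
end
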